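/- arXiv:2001.07985 — 2 statements merged into one kernel-verified Lean document; each statement's English description precedes it below -/
import Mathlib

section
/- Let D > 0, c_1 > 0, and suppose the sequence (c_j) satisfies c_{j+1} ≥ D c_j³/3^{3j} for all j ≥ 1. If c_1 · 3^{-9/4} · D^{1/2} > 1, then c_j → ∞ as j → ∞. -/
open Real Filter

theorem stmt_10 (D : ℝ) (hD : 0 < D) (c : ℕ → ℝ) (hc1 : 0 < c 1)
    (hrec : ∀ j ≥ 1, c (j + 1) ≥ D * (c j) ^ 3 / 3 ^ (3 * j))
    (hbig : c 1 * (3 : ℝ) ^ (-(9 : ℝ) / 4) * D ^ ((1 : ℝ) / 2) > 1) :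
    Filter.Tendsto c Filter.atTop Filter.atTop := by
  set r : ℝ := Real.sqrt 27 with hr
  have hr0 : (0:ℝ) ≤ r := Real.sqrt_nonneg _
  have hr2 : r ^ 2 = 27 := Real.sq_sqrt (by norm_num)
  have hr1 : 1 < r := by nlinarith [hr2, hr0]
  -- key inequality: D * c 1 ^ 2 > 27 * r
  have hkey : D * c 1 ^ 2 > 27 * r := by
    have h1 : (c 1 * (3 : ℝ) ^ (-(9 : ℝ) / 4) * D ^ ((1 : ℝ) / 2)) ^ 2 > 1 := by
      nlinarith [hbig]
    have h3 : ((3 : ℝ) ^ (-(9 : ℝ) / 4)) ^ 2 = (3:ℝ) ^ (-(9:ℝ)/2) := by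
      rw [← Real.rpow_natCast ((3:ℝ) ^ (-(9:ℝ)/4)) 2, ← Real.rpow_mul (by norm_num)]
      norm_num
    have h4 : (D ^ ((1 : ℝ) / 2)) ^ 2 = D := by
      rw [← Real.rpow_natCast (D ^ ((1:ℝ)/2)) 2, ← Real.rpow_mul hD.le]
      norm_num
    have h5 : c 1 ^ 2 * (3:ℝ) ^ (-(9:ℝ)/2) * D > 1 := by
      calc c 1 ^ 2 * (3:ℝ) ^ (-(9:ℝ)/2) * D
          = (c 1 * (3 : ℝ) ^ (-(9 : ℝ) / 4) * D ^ ((1 : ℝ) / 2)) ^ 2 := by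
            rw [mul_pow, mul_pow, h3, h4]
        _ > 1 := h1
    have h6 : (3:ℝ) ^ ((9:ℝ)/2) = 27 * r := by
      have : r = (27:ℝ) ^ ((1:ℝ)/2) := by
        rw [hr, Real.sqrt_eq_rpow]
      rw [this]
      have h27 : (27:ℝ) = (3:ℝ) ^ ((3:ℝ)) := by norm_num [Real.rpow_natCast]
      rw [h27, ← Real.rpow_mul (by norm_num), ← Real.rpow_add (by norm_num)]
      norm_num
    have h7 : (3:ℝ) ^ (-(9:ℝ)/2) = ((3:ℝ) ^ ((9:ℝ)/2))⁻¹ := by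
      rw [← Real.rpow_neg (by norm_num)]
      norm_num
    have h8 : (0:ℝ) < (3:ℝ) ^ ((9:ℝ)/2) := Real.rpow_pos_of_pos (by norm_num) _
    rw [h7] at h5
    have h9 : c 1 ^ 2 * D > (3:ℝ) ^ ((9:ℝ)/2) := by
      have h := mul_lt_mul_of_pos_left h5 h8
      calc (3:ℝ) ^ ((9:ℝ)/2) = (3:ℝ) ^ ((9:ℝ)/2) * 1 := by ring
        _ < (3:ℝ) ^ ((9:ℝ)/2) * (c 1 ^ 2 * ((3:ℝ) ^ ((9:ℝ)/2))⁻¹ * D) := h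
        _ = c 1 ^ 2 * D := by field_simp
    rw [h6] at h9
    linarith
  -- main induction: c (j+1) ≥ c 1 * r ^ j
  have hmain : ∀ j : ℕ, c (j + 1) ≥ c 1 * r ^ j := by
    intro j
    induction j with
    | zero => simp
    | succ n ih =>
      have hpos : 0 < c 1 * r ^ n := by positivity
      have hcn : 0 < c (n + 1) := lt_of_lt_of_le hpos ih
      have hrecn := hrec (n + 1) (by omega)
      have hcube : c (n + 1) ^ 3 ≥ (c 1 * r ^ n) ^ 3 := by
        exact pow_le_pow_left₀ hpos.le ih 3
      have hden : (0:ℝ) < (3:ℝ) ^ (3 * (n + 1)) := by positivity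
      have h27 : ((3:ℝ)) ^ (3 * (n + 1)) = 27 * (r ^ n) ^ 2 := by
        rw [pow_mul]
        norm_num
        rw [← pow_mul, mul_comm n 2, pow_mul, hr2]
        ring
      have hs : (0:ℝ) < r ^ n := by positivity
      have hstep : D * (c 1 * r ^ n) ^ 3 / (3:ℝ) ^ (3 * (n + 1)) ≥ c 1 * r ^ (n + 1) := by
        rw [h27, ge_iff_le, le_div_iff₀ (by positivity)]
        have : (c 1 * r ^ n) ^ 3 = c 1 ^ 3 * (r ^ n) ^ 2 * r ^ n := by ring
        rw [this, pow_succ]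
        nlinarith [mul_lt_mul_of_pos_right hkey (mul_pos hc1 (pow_pos hs 3)), hs, hc1]
      calc c (n + 1 + 1) ≥ D * c (n + 1) ^ 3 / (3:ℝ) ^ (3 * (n + 1)) := hrecn
        _ ≥ D * (c 1 * r ^ n) ^ 3 / (3:ℝ) ^ (3 * (n + 1)) := by
            gcongr
        _ ≥ c 1 * r ^ (n + 1) := hstep
  -- conclude
  have htend : Tendsto (fun j : ℕ => c 1 * r ^ j) atTop atTop :=
    Tendsto.const_mul_atTop hc1 (tendsto_pow_atTop_atTop_of_one_lt hr1)
  have h2 : Tendsto (fun j : ℕ => c (j + 1)) atTop atTop :=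
    tendsto_atTop_mono (fun j => hmain j) htend
  exact (tendsto_add_atTop_iff_nat 1).mp h2
end

section
/- Let n ≥ 2, γ ≥ 0, R > 0, δ > 0, and suppose u : (0,∞) × [0,∞) → ℝ is nonnegative and satisfies u(ρ,s) ≥ c s^a {ρ - s - max(R, δs)}^d / (1+ρ+s)^b for all ρ with ρ - s ≥ max(R, δs), for some constants a,b,c,d ≥ 0 with c > 0. Define G_γ(u²)(λ,s) := (2^{3-n} ω_{n-1} / λ^{n-2}) ∫_0^∞ ρ u²(ρ,s) {∫_{|ρ-λ|}^{ρ+λ} η^{1-γ} h(η,ρ,λ) dη} dρ with h(η,ρ,λ) = {η²-(ρ-λ)²}^{(n-3)/2}{(ρ+λ)²-η²}^{(n-3)/2}. Then there exists a constant C = C(n) > 0 such that G_γ(u²)(λ,s) ≥ C c² s^{2a+(3n-3)/2} {λ - s - max(R, δs)}^{2d+1} / ((2d+1) 2^γ λ^{(n-1)/2+γ} (1+s+λ)^{2b}) whenever λ - s ≥ max(R, δs). -/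
open Real MeasureTheory intervalIntegral

/-- The kernel `h(η,ρ,λ)` from John's spherical means identity. -/
noncomputable def hKer (n : ℕ) (η ρ lam : ℝ) : ℝ :=
  (η ^ 2 - (ρ - lam) ^ 2) ^ (((n : ℝ) - 3) / 2) * ((ρ + lam) ^ 2 - η ^ 2) ^ (((n : ℝ) - 3) / 2)

/-- The measure of the unit sphere in `ℝ^{n-1}`. -/
noncomputable def omegaMinus (n : ℕ) : ℝ :=
  2 * Real.pi ^ (((n : ℝ) - 1) / 2) / Real.Gamma (((n : ℝ) - 1) / 2)

/-- The radial form `G_γ(U)(λ,s)` of the convolution with `|x|^{-γ}`, for `U = u²`. -/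
noncomputable def Gconv (n : ℕ) (γ : ℝ) (u : ℝ → ℝ → ℝ) (lam s : ℝ) : ℝ :=
  2 ^ (3 - (n : ℝ)) * omegaMinus n / lam ^ ((n : ℝ) - 2) *
    ∫ ρ in Set.Ioi (0 : ℝ), ρ * (u ρ s) ^ 2 *
      ∫ η in |ρ - lam|..(ρ + lam), η ^ (1 - γ) * hKer n η ρ lam

/-! ### Auxiliary lemmas -/

private lemma rpow_upper_max {A B x e : ℝ} (hA : 0 < A) (h1 : A ≤ x) (h2 : x ≤ B) :
    x ^ e ≤ max (A ^ e) (B ^ e) := by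
  rcases le_or_gt 0 e with he | he
  · exact le_max_of_le_right (Real.rpow_le_rpow (hA.le.trans h1) h2 he)
  · exact le_max_of_le_left (Real.rpow_le_rpow_of_nonpos hA h1 he.le)

private lemma sq_rpow {x : ℝ} (hx : 0 ≤ x) (y : ℝ) : (x ^ y) ^ (2 : ℕ) = x ^ (y * 2) := by
  rw [← Real.rpow_natCast (x ^ y) 2, ← Real.rpow_mul hx]
  norm_num

private lemma factor_lower {A x e : ℝ} (hA : 0 < A) (h1 : A ≤ x) (h2 : x ≤ 3 * A)
    (he : -(1 / 2 : ℝ) ≤ e) : (3 : ℝ) ^ (-(1 / 2 : ℝ)) * A ^ e ≤ x ^ e := by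
  have hx : 0 < x := hA.trans_le h1
  have hApos : 0 < A ^ e := Real.rpow_pos_of_pos hA e
  rcases le_or_gt 0 e with h | h
  · have h31 : (3 : ℝ) ^ (-(1 / 2 : ℝ)) ≤ 1 := by
      calc (3 : ℝ) ^ (-(1 / 2 : ℝ)) ≤ (3 : ℝ) ^ (0 : ℝ) :=
            Real.rpow_le_rpow_of_exponent_le (by norm_num) (by norm_num)
        _ = 1 := Real.rpow_zero 3
    calc (3 : ℝ) ^ (-(1 / 2 : ℝ)) * A ^ e ≤ 1 * A ^ e :=
          mul_le_mul_of_nonneg_right h31 hApos.le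
      _ = A ^ e := one_mul _
      _ ≤ x ^ e := Real.rpow_le_rpow hA.le h1 h
  · have hx3 : (3 * A) ^ e ≤ x ^ e := Real.rpow_le_rpow_of_nonpos hx h2 h.le
    have hsplit : ((3 : ℝ) * A) ^ e = 3 ^ e * A ^ e := Real.mul_rpow (by norm_num) hA.le
    have h3e : (3 : ℝ) ^ (-(1 / 2 : ℝ)) ≤ 3 ^ e :=
      Real.rpow_le_rpow_of_exponent_le (by norm_num) he
    calc (3 : ℝ) ^ (-(1 / 2 : ℝ)) * A ^ e ≤ 3 ^ e * A ^ e :=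
          mul_le_mul_of_nonneg_right h3e hApos.le
      _ = (3 * A) ^ e := hsplit.symm
      _ ≤ x ^ e := hx3

private lemma eta_lower {lam η γ : ℝ} (hγ : 0 ≤ γ) (hl : 0 < lam) (h1 : lam ≤ η)
    (h2 : η ≤ 2 * lam) : (2 : ℝ) ^ (-γ) * lam ^ (1 - γ) ≤ η ^ (1 - γ) := by
  have hη : 0 < η := hl.trans_le h1
  rcases le_or_gt 0 (1 - γ) with h | h
  · have h21 : (2 : ℝ) ^ (-γ) ≤ 1 := by
      calc (2 : ℝ) ^ (-γ) ≤ (2 : ℝ) ^ (0 : ℝ) :=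
            Real.rpow_le_rpow_of_exponent_le one_le_two (by linarith)
        _ = 1 := Real.rpow_zero 2
    calc (2 : ℝ) ^ (-γ) * lam ^ (1 - γ) ≤ 1 * lam ^ (1 - γ) :=
          mul_le_mul_of_nonneg_right h21 (Real.rpow_nonneg hl.le _)
      _ = lam ^ (1 - γ) := one_mul _
      _ ≤ η ^ (1 - γ) := Real.rpow_le_rpow hl.le h1 h
  · have h2l : (2 * lam) ^ (1 - γ) ≤ η ^ (1 - γ) := Real.rpow_le_rpow_of_nonpos hη h2 h.le
    have hsplit : ((2 : ℝ) * lam) ^ (1 - γ) = 2 ^ (1 - γ) * lam ^ (1 - γ) :=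
      Real.mul_rpow (by norm_num) hl.le
    have h2e : (2 : ℝ) ^ (-γ) ≤ 2 ^ (1 - γ) :=
      Real.rpow_le_rpow_of_exponent_le one_le_two (by linarith)
    calc (2 : ℝ) ^ (-γ) * lam ^ (1 - γ) ≤ 2 ^ (1 - γ) * lam ^ (1 - γ) :=
          mul_le_mul_of_nonneg_right h2e (Real.rpow_nonneg hl.le _)
      _ = (2 * lam) ^ (1 - γ) := hsplit.symm
      _ ≤ η ^ (1 - γ) := h2l

private lemma integrand_nonneg (n : ℕ) (γ ρ lam : ℝ) {η : ℝ}
    (h1 : |ρ - lam| ≤ η) (h2 : η ≤ ρ + lam) :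
    0 ≤ η ^ (1 - γ) * hKer n η ρ lam := by
  have hη : 0 ≤ η := (abs_nonneg _).trans h1
  have hF1 : 0 ≤ η ^ 2 - (ρ - lam) ^ 2 := by
    have h := pow_le_pow_left₀ (abs_nonneg (ρ - lam)) h1 2
    rw [sq_abs] at h
    linarith
  have hF2 : 0 ≤ (ρ + lam) ^ 2 - η ^ 2 := by
    have h := pow_le_pow_left₀ hη h2 2
    linarith
  exact mul_nonneg (Real.rpow_nonneg hη _)
    (mul_nonneg (Real.rpow_nonneg hF1 _) (Real.rpow_nonneg hF2 _))

private lemma integrand_measurable (n : ℕ) (γ ρ lam : ℝ) :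
    Measurable fun η : ℝ => η ^ (1 - γ) * hKer n η ρ lam := by
  unfold hKer
  fun_prop

private lemma hker_lower (n : ℕ) (hn : 2 ≤ n) {ρ lam η : ℝ} (hρ : 0 < ρ) (hρlam : ρ ≤ lam)
    (h1 : lam ≤ η) (h2 : η ≤ lam + ρ / 2) :
    (ρ * lam) ^ ((n : ℝ) - 3) / 3 ≤ hKer n η ρ lam := by
  have hlam : 0 < lam := hρ.trans_le hρlam
  have hn2 : (2 : ℝ) ≤ (n : ℝ) := by exact_mod_cast hn
  set e := ((n : ℝ) - 3) / 2 with hedef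
  have he : -(1 / 2 : ℝ) ≤ e := by rw [hedef]; linarith
  have hA : 0 < ρ * lam := mul_pos hρ hlam
  have hF1l : ρ * lam ≤ η ^ 2 - (ρ - lam) ^ 2 := by nlinarith
  have hF1u : η ^ 2 - (ρ - lam) ^ 2 ≤ 3 * (ρ * lam) := by nlinarith
  have hF2l : ρ * lam ≤ (ρ + lam) ^ 2 - η ^ 2 := by nlinarith
  have hF2u : (ρ + lam) ^ 2 - η ^ 2 ≤ 3 * (ρ * lam) := by nlinarith
  have b1 := factor_lower hA hF1l hF1u he
  have b2 := factor_lower hA hF2l hF2u he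
  have h3 : (3 : ℝ) ^ (-(1 / 2 : ℝ)) * (3 : ℝ) ^ (-(1 / 2 : ℝ)) = 1 / 3 := by
    rw [← Real.rpow_add (by norm_num : (0:ℝ) < 3)]
    norm_num
  have hee : (ρ * lam) ^ e * (ρ * lam) ^ e = (ρ * lam) ^ ((n : ℝ) - 3) := by
    rw [← Real.rpow_add hA]
    congr 1
    rw [hedef]; ring
  have hmul : ((3 : ℝ) ^ (-(1 / 2 : ℝ)) * (ρ * lam) ^ e) *
      ((3 : ℝ) ^ (-(1 / 2 : ℝ)) * (ρ * lam) ^ e) = (ρ * lam) ^ ((n : ℝ) - 3) / 3 := by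
    rw [mul_mul_mul_comm, h3, hee]; ring
  unfold hKer
  calc (ρ * lam) ^ ((n : ℝ) - 3) / 3
      = ((3 : ℝ) ^ (-(1 / 2 : ℝ)) * (ρ * lam) ^ e) *
        ((3 : ℝ) ^ (-(1 / 2 : ℝ)) * (ρ * lam) ^ e) := hmul.symm
    _ ≤ (η ^ 2 - (ρ - lam) ^ 2) ^ e * ((ρ + lam) ^ 2 - η ^ 2) ^ e :=
        mul_le_mul b1 b2
          (mul_nonneg (Real.rpow_nonneg (by norm_num) _) (Real.rpow_nonneg hA.le _))
          (Real.rpow_nonneg (by nlinarith) _)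

private lemma hker_integrable (n : ℕ) (hn : 2 ≤ n) (γ : ℝ) {ρ lam : ℝ} (hρ : 0 < ρ)
    (hρlam : ρ < lam) :
    IntervalIntegrable (fun η => η ^ (1 - γ) * hKer n η ρ lam) volume (lam - ρ) (ρ + lam) := by
  have hlam : 0 < lam := hρ.trans hρlam
  have hn2 : (2 : ℝ) ≤ (n : ℝ) := by exact_mod_cast hn
  set p := lam - ρ with hp
  set q := lam + ρ with hq
  have hq' : ρ + lam = q := by rw [hq]; ring
  rw [hq']
  have hp0 : 0 < p := by rw [hp]; linarith
  have hpl : p < lam := by rw [hp]; linarith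
  have hlq : lam < q := by rw [hq]; linarith
  set e := ((n : ℝ) - 3) / 2 with hedef
  have he : (-1 : ℝ) < e := by rw [hedef]; linarith
  have hmeas := integrand_measurable n γ ρ lam
  rw [intervalIntegrable_iff_integrableOn_Ioc_of_le (by linarith)]
  rw [show Set.Ioc p q = Set.Ioc p lam ∪ Set.Ioc lam q from
    (Set.Ioc_union_Ioc_eq_Ioc hpl.le hlq.le).symm]
  have habs : |ρ - lam| = p := by
    rw [abs_sub_comm, ← hp]; exact abs_of_pos hp0
  refine MeasureTheory.IntegrableOn.union ?_ ?_
  · -- on Ioc p lam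
    have hbase : IntervalIntegrable (fun x : ℝ => (x - p) ^ e) volume p lam := by
      have h := (intervalIntegral.intervalIntegrable_rpow' (a := 0) (b := lam - p) he
        ).comp_sub_right p
      simpa using h
    set K1 : ℝ := max (p ^ (1 - γ)) (lam ^ (1 - γ)) * max ((2 * p) ^ e) ((lam + p) ^ e) *
        max (ρ ^ e) ((2 * ρ) ^ e) * max ((2 * lam) ^ e) ((q + lam) ^ e) with hK1
    refine Integrable.mono' ((hbase.1).const_mul K1) (hmeas.aestronglyMeasurable.restrict) ?_
    rw [ae_restrict_iff' measurableSet_Ioc]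
    refine Filter.Eventually.of_forall fun η hη => ?_
    obtain ⟨hη1, hη2⟩ := hη
    have hη0 : 0 < η := hp0.trans hη1
    have hfac : η ^ (1 - γ) * hKer n η ρ lam
        = (η ^ (1 - γ) * (η + p) ^ e * (q - η) ^ e * (q + η) ^ e) * (η - p) ^ e := by
      unfold hKer
      rw [show η ^ 2 - (ρ - lam) ^ 2 = (η - p) * (η + p) by rw [hp]; ring,
          show (ρ + lam) ^ 2 - η ^ 2 = (q - η) * (q + η) by rw [hq]; ring,
          Real.mul_rpow (by linarith) (by linarith),
          Real.mul_rpow (by linarith [hlq, hη2] : (0:ℝ) ≤ q - η) (by linarith)]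
      rw [← hedef]
      ring
    have hnn : 0 ≤ η ^ (1 - γ) * hKer n η ρ lam :=
      integrand_nonneg n γ ρ lam (by rw [habs]; linarith) (by rw [hq']; linarith)
    rw [Real.norm_eq_abs, abs_of_nonneg hnn, hfac]
    have b1 : η ^ (1 - γ) ≤ max (p ^ (1 - γ)) (lam ^ (1 - γ)) :=
      rpow_upper_max hp0 hη1.le hη2
    have b2 : (η + p) ^ e ≤ max ((2 * p) ^ e) ((lam + p) ^ e) :=
      rpow_upper_max (by linarith) (by linarith) (by linarith)
    have b3 : (q - η) ^ e ≤ max (ρ ^ e) ((2 * ρ) ^ e) :=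
      rpow_upper_max hρ (by linarith) (by linarith)
    have b4 : (q + η) ^ e ≤ max ((2 * lam) ^ e) ((q + lam) ^ e) :=
      rpow_upper_max (by linarith) (by linarith) (by linarith)
    have hstep : η ^ (1 - γ) * (η + p) ^ e * (q - η) ^ e * (q + η) ^ e ≤ K1 := by
      rw [hK1]
      refine mul_le_mul (mul_le_mul (mul_le_mul b1 b2 (Real.rpow_nonneg (by linarith) _)
        (le_trans (Real.rpow_nonneg hp0.le _) (le_max_left _ _))) b3
        (Real.rpow_nonneg (by linarith [hlq, hη2]) _)
        (mul_nonneg (le_trans (Real.rpow_nonneg hp0.le _) (le_max_left _ _))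
          (le_trans (Real.rpow_nonneg (by linarith : (0:ℝ) ≤ 2 * p) _) (le_max_left _ _)))) b4
        (Real.rpow_nonneg (by linarith) _) ?_
      refine mul_nonneg (mul_nonneg (le_trans (Real.rpow_nonneg hp0.le _) (le_max_left _ _))
        (le_trans (Real.rpow_nonneg (by linarith : (0:ℝ) ≤ 2 * p) _) (le_max_left _ _)))
        (le_trans (Real.rpow_nonneg hρ.le _) (le_max_left _ _))
    exact mul_le_mul_of_nonneg_right hstep (Real.rpow_nonneg (by linarith) e)
  · -- on Ioc lam q
    have hbase : IntervalIntegrable (fun x : ℝ => (q - x) ^ e) volume lam q := by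
      have h := (intervalIntegral.intervalIntegrable_rpow' (a := 0) (b := q - lam) he
        ).comp_sub_left q
      simpa using h.symm
    set K2 : ℝ := max (lam ^ (1 - γ)) (q ^ (1 - γ)) * max (ρ ^ e) ((2 * ρ) ^ e) *
        max ((lam + p) ^ e) ((q + p) ^ e) * max ((q + lam) ^ e) ((2 * q) ^ e) with hK2
    refine Integrable.mono' ((hbase.1).const_mul K2) (hmeas.aestronglyMeasurable.restrict) ?_
    rw [ae_restrict_iff' measurableSet_Ioc]
    refine Filter.Eventually.of_forall fun η hη => ?_
    obtain ⟨hη1, hη2⟩ := hη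
    have hη0 : 0 < η := hlam.trans hη1
    have hfac : η ^ (1 - γ) * hKer n η ρ lam
        = (η ^ (1 - γ) * (η - p) ^ e * (η + p) ^ e * (q + η) ^ e) * (q - η) ^ e := by
      unfold hKer
      rw [show η ^ 2 - (ρ - lam) ^ 2 = (η - p) * (η + p) by rw [hp]; ring,
          show (ρ + lam) ^ 2 - η ^ 2 = (q - η) * (q + η) by rw [hq]; ring,
          Real.mul_rpow (by linarith [hpl, hη1] : (0:ℝ) ≤ η - p) (by linarith),
          Real.mul_rpow (by linarith : (0:ℝ) ≤ q - η) (by linarith)]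
      rw [← hedef]
      ring
    have hnn : 0 ≤ η ^ (1 - γ) * hKer n η ρ lam :=
      integrand_nonneg n γ ρ lam (by rw [habs]; linarith) (by rw [hq']; linarith)
    rw [Real.norm_eq_abs, abs_of_nonneg hnn, hfac]
    have b1 : η ^ (1 - γ) ≤ max (lam ^ (1 - γ)) (q ^ (1 - γ)) :=
      rpow_upper_max hlam hη1.le hη2
    have b2 : (η - p) ^ e ≤ max (ρ ^ e) ((2 * ρ) ^ e) :=
      rpow_upper_max hρ (by linarith) (by linarith)
    have b3 : (η + p) ^ e ≤ max ((lam + p) ^ e) ((q + p) ^ e) :=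
      rpow_upper_max (by linarith) (by linarith) (by linarith)
    have b4 : (q + η) ^ e ≤ max ((q + lam) ^ e) ((2 * q) ^ e) :=
      rpow_upper_max (by linarith) (by linarith) (by linarith)
    have hstep : η ^ (1 - γ) * (η - p) ^ e * (η + p) ^ e * (q + η) ^ e ≤ K2 := by
      rw [hK2]
      refine mul_le_mul (mul_le_mul (mul_le_mul b1 b2
        (Real.rpow_nonneg (by linarith [hpl, hη1]) _)
        (le_trans (Real.rpow_nonneg hlam.le _) (le_max_left _ _))) b3
        (Real.rpow_nonneg (by linarith) _)
        (mul_nonneg (le_trans (Real.rpow_nonneg hlam.le _) (le_max_left _ _))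
          (le_trans (Real.rpow_nonneg hρ.le _) (le_max_left _ _)))) b4
        (Real.rpow_nonneg (by linarith) _) ?_
      refine mul_nonneg (mul_nonneg (le_trans (Real.rpow_nonneg hlam.le _) (le_max_left _ _))
        (le_trans (Real.rpow_nonneg hρ.le _) (le_max_left _ _)))
        (le_trans (Real.rpow_nonneg (by linarith : (0:ℝ) ≤ lam + p) _) (le_max_left _ _))
    exact mul_le_mul_of_nonneg_right hstep (Real.rpow_nonneg (by linarith) e)

private lemma inner_lower (n : ℕ) (hn : 2 ≤ n) {γ ρ lam : ℝ} (hγ : 0 ≤ γ)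
    (hρ : 0 < ρ) (hρlam : ρ < lam) :
    ρ / 2 * ((2 : ℝ) ^ (-γ) * lam ^ (1 - γ) * ((ρ * lam) ^ ((n : ℝ) - 3) / 3)) ≤
      ∫ η in |ρ - lam|..(ρ + lam), η ^ (1 - γ) * hKer n η ρ lam := by
  have hlam : 0 < lam := hρ.trans hρlam
  have habs : |ρ - lam| = lam - ρ := by
    rw [abs_sub_comm]; exact abs_of_pos (by linarith)
  rw [habs]
  have hint := hker_integrable n hn γ hρ hρlam
  have hmono : (∫ η in lam..(lam + ρ / 2), η ^ (1 - γ) * hKer n η ρ lam) ≤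
      ∫ η in (lam - ρ)..(ρ + lam), η ^ (1 - γ) * hKer n η ρ lam := by
    refine intervalIntegral.integral_mono_interval (by linarith) (by linarith) (by linarith)
      ?_ hint
    filter_upwards [MeasureTheory.ae_restrict_mem measurableSet_Ioc] with η hη
    exact integrand_nonneg n γ ρ lam (by rw [habs]; linarith [hη.1]) hη.2
  refine le_trans ?_ hmono
  have hsub : IntervalIntegrable (fun η => η ^ (1 - γ) * hKer n η ρ lam) volume lam
      (lam + ρ / 2) := by
    refine hint.mono_set ?_
    rw [Set.uIcc_of_le (by linarith), Set.uIcc_of_le (by linarith)]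
    exact Set.Icc_subset_Icc (by linarith) (by linarith)
  have hconst : ∫ _η in lam..(lam + ρ / 2),
      ((2 : ℝ) ^ (-γ) * lam ^ (1 - γ) * ((ρ * lam) ^ ((n : ℝ) - 3) / 3)) =
      ρ / 2 * ((2 : ℝ) ^ (-γ) * lam ^ (1 - γ) * ((ρ * lam) ^ ((n : ℝ) - 3) / 3)) := by
    rw [intervalIntegral.integral_const, smul_eq_mul]
    congr 1
    ring
  rw [← hconst]
  refine intervalIntegral.integral_mono_on (by linarith) (intervalIntegrable_const) hsub ?_
  intro η hη
  obtain ⟨hη1, hη2⟩ := hη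
  have h2lam : η ≤ 2 * lam := by linarith
  refine mul_le_mul (eta_lower hγ hlam hη1 h2lam)
    (hker_lower n hn hρ hρlam.le hη1 hη2) ?_ (Real.rpow_nonneg (by linarith) _)
  exact div_nonneg (Real.rpow_nonneg (mul_nonneg hρ.le hlam.le) _) (by norm_num)

private lemma core_ineq (n : ℕ) (hn : 2 ≤ n) {γ a b c d s M ρ lam : ℝ}
    (hγ : 0 ≤ γ) (ha : 0 ≤ a) (hb : 0 ≤ b) (hc : 0 < c) (hd : 0 ≤ d)
    (hs : 0 ≤ s) (hM : 0 < M) (hρ : s + M < ρ) (hρlam : ρ < lam) :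
    1 / 6 * 2 ^ (-γ) * c ^ 2 * s ^ (2 * a + (3 * (n : ℝ) - 3) / 2) *
        lam ^ (((n : ℝ) - 3) / 2 - γ) * ((1 + s + lam) ^ (2 * b))⁻¹ * (ρ - s - M) ^ (2 * d)
      ≤ ρ * (c * s ^ a * (ρ - s - M) ^ d / (1 + ρ + s) ^ b) ^ 2 *
          (ρ / 2 * ((2 : ℝ) ^ (-γ) * lam ^ (1 - γ) * ((ρ * lam) ^ ((n : ℝ) - 3) / 3))) := by
  have hρ0 : 0 < ρ := by linarith
  have hlam : 0 < lam := by linarith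
  have hn2 : (2 : ℝ) ≤ (n : ℝ) := by exact_mod_cast hn
  have hX0 : (0 : ℝ) ≤ ρ - s - M := by linarith
  have h1ρs : (0 : ℝ) < 1 + ρ + s := by linarith
  have hsq : (c * s ^ a * (ρ - s - M) ^ d / (1 + ρ + s) ^ b) ^ 2
      = c ^ 2 * s ^ (a * 2) * (ρ - s - M) ^ (d * 2) * ((1 + ρ + s) ^ (b * 2))⁻¹ := by
    rw [div_pow, mul_pow, mul_pow, sq_rpow hs, sq_rpow hX0, sq_rpow h1ρs.le, div_eq_mul_inv]
  have hρpow : ρ * (ρ / 2) * ρ ^ ((n : ℝ) - 3) = ρ ^ ((n : ℝ) - 1) / 2 := by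
    rw [show ρ * (ρ / 2) = (ρ : ℝ) ^ (2 : ℕ) / 2 by ring, div_mul_eq_mul_div,
      ← Real.rpow_natCast ρ 2, ← Real.rpow_add hρ0]
    congr 2
    push_cast
    ring
  have hmulr : (ρ * lam) ^ ((n : ℝ) - 3) = ρ ^ ((n : ℝ) - 3) * lam ^ ((n : ℝ) - 3) :=
    Real.mul_rpow hρ0.le hlam.le
  have hlam1 : lam ^ (1 - γ) * lam ^ ((n : ℝ) - 3) =
      lam ^ (((n : ℝ) - 1) / 2) * lam ^ (((n : ℝ) - 3) / 2 - γ) := by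
    rw [← Real.rpow_add hlam, ← Real.rpow_add hlam]
    congr 1
    ring
  have hsE : s ^ (2 * a + (3 * (n : ℝ) - 3) / 2) =
      s ^ (a * 2) * (s ^ ((n : ℝ) - 1) * s ^ (((n : ℝ) - 1) / 2)) := by
    rw [show 2 * a + (3 * (n : ℝ) - 3) / 2 = a * 2 + ((n : ℝ) - 1 + ((n : ℝ) - 1) / 2) by ring,
      Real.rpow_add' hs (by intro h; nlinarith),
      Real.rpow_add' hs (by intro h; nlinarith)]
  have hX2 : (ρ - s - M) ^ (2 * d) = (ρ - s - M) ^ (d * 2) := by rw [mul_comm]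
  have hI1 : ((1 + s + lam) ^ (2 * b))⁻¹ = ((1 + s + lam) ^ (b * 2))⁻¹ := by rw [mul_comm]
  set Q : ℝ := 2 ^ (-γ) * c ^ 2 * s ^ (a * 2) * (ρ - s - M) ^ (d * 2) *
      lam ^ (((n : ℝ) - 3) / 2 - γ) * (1 / 6) with hQ
  have hQ0 : 0 ≤ Q := by
    rw [hQ]
    have q1 : (0:ℝ) ≤ 2 ^ (-γ) := Real.rpow_nonneg (by norm_num) _
    have q2 : (0:ℝ) ≤ s ^ (a * 2) := Real.rpow_nonneg hs _
    have q3 : (0:ℝ) ≤ (ρ - s - M) ^ (d * 2) := Real.rpow_nonneg hX0 _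
    have q4 : (0:ℝ) ≤ lam ^ (((n : ℝ) - 3) / 2 - γ) := Real.rpow_nonneg hlam.le _
    positivity
  have hmid : s ^ ((n : ℝ) - 1) * s ^ (((n : ℝ) - 1) / 2) * ((1 + s + lam) ^ (b * 2))⁻¹
      ≤ ρ ^ ((n : ℝ) - 1) * lam ^ (((n : ℝ) - 1) / 2) * ((1 + ρ + s) ^ (b * 2))⁻¹ := by
    have m1 : s ^ ((n : ℝ) - 1) ≤ ρ ^ ((n : ℝ) - 1) :=
      Real.rpow_le_rpow hs (by linarith) (by linarith)
    have m2 : s ^ (((n : ℝ) - 1) / 2) ≤ lam ^ (((n : ℝ) - 1) / 2) :=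
      Real.rpow_le_rpow hs (by linarith) (by linarith)
    have m3 : ((1 + s + lam) ^ (b * 2))⁻¹ ≤ ((1 + ρ + s) ^ (b * 2))⁻¹ := by
      refine inv_anti₀ (Real.rpow_pos_of_pos h1ρs _) ?_
      exact Real.rpow_le_rpow h1ρs.le (by linarith) (by positivity)
    refine mul_le_mul (mul_le_mul m1 m2 (Real.rpow_nonneg hs _)
      (Real.rpow_nonneg hρ0.le _)) m3 (inv_nonneg.2 (Real.rpow_nonneg (by linarith) _)) ?_
    exact mul_nonneg (Real.rpow_nonneg hρ0.le _) (Real.rpow_nonneg hlam.le _)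
  calc 1 / 6 * 2 ^ (-γ) * c ^ 2 * s ^ (2 * a + (3 * (n : ℝ) - 3) / 2) *
        lam ^ (((n : ℝ) - 3) / 2 - γ) * ((1 + s + lam) ^ (2 * b))⁻¹ * (ρ - s - M) ^ (2 * d)
      = Q * (s ^ ((n : ℝ) - 1) * s ^ (((n : ℝ) - 1) / 2) * ((1 + s + lam) ^ (b * 2))⁻¹) := by
        rw [hsE, hX2, hI1, hQ]; ring
    _ ≤ Q * (ρ ^ ((n : ℝ) - 1) * lam ^ (((n : ℝ) - 1) / 2) * ((1 + ρ + s) ^ (b * 2))⁻¹) :=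
        mul_le_mul_of_nonneg_left hmid hQ0
    _ = ρ * (c * s ^ a * (ρ - s - M) ^ d / (1 + ρ + s) ^ b) ^ 2 *
          (ρ / 2 * ((2 : ℝ) ^ (-γ) * lam ^ (1 - γ) * ((ρ * lam) ^ ((n : ℝ) - 3) / 3))) := by
        rw [hsq, hmulr]
        calc Q * (ρ ^ ((n : ℝ) - 1) * lam ^ (((n : ℝ) - 1) / 2) * ((1 + ρ + s) ^ (b * 2))⁻¹)
            = (c ^ 2 * s ^ (a * 2) * (ρ - s - M) ^ (d * 2) * ((1 + ρ + s) ^ (b * 2))⁻¹ *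
                2 ^ (-γ) / 3) * (ρ ^ ((n : ℝ) - 1) / 2) *
                (lam ^ (((n : ℝ) - 1) / 2) * lam ^ (((n : ℝ) - 3) / 2 - γ)) := by
              rw [hQ]; ring
          _ = (c ^ 2 * s ^ (a * 2) * (ρ - s - M) ^ (d * 2) * ((1 + ρ + s) ^ (b * 2))⁻¹ *
                2 ^ (-γ) / 3) * (ρ * (ρ / 2) * ρ ^ ((n : ℝ) - 3)) *
                (lam ^ (1 - γ) * lam ^ ((n : ℝ) - 3)) := by
              rw [hρpow, hlam1]
          _ = ρ * (c ^ 2 * s ^ (a * 2) * (ρ - s - M) ^ (d * 2) * ((1 + ρ + s) ^ (b * 2))⁻¹) *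
                (ρ / 2 * ((2 : ℝ) ^ (-γ) * lam ^ (1 - γ) *
                  (ρ ^ ((n : ℝ) - 3) * lam ^ ((n : ℝ) - 3) / 3))) := by
              ring

theorem stmt_13 (n : ℕ) (hn : 2 ≤ n) :
    ∃ C > 0, ∀ (γ R δ a b c d : ℝ) (u : ℝ → ℝ → ℝ),
      0 ≤ γ → 0 < R → 0 < δ → 0 ≤ a → 0 ≤ b → 0 < c → 0 ≤ d →
      (∀ ρ s, 0 ≤ s → max R (δ * s) ≤ ρ - s →
        u ρ s ≥ c * s ^ a * (ρ - s - max R (δ * s)) ^ d / (1 + ρ + s) ^ b) →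
      (∀ ρ s, 0 ≤ u ρ s) →
      ∀ lam s, 0 ≤ s → max R (δ * s) ≤ lam - s →
        IntegrableOn
          (fun ρ => ρ * (u ρ s) ^ 2 *
            ∫ η in |ρ - lam|..(ρ + lam), η ^ (1 - γ) * hKer n η ρ lam)
          (Set.Ioi (0 : ℝ)) →
        Gconv n γ u lam s ≥
          C * c ^ 2 * s ^ (2 * a + (3 * (n : ℝ) - 3) / 2) *
            (lam - s - max R (δ * s)) ^ (2 * d + 1) /
              ((2 * d + 1) * 2 ^ γ * lam ^ (((n : ℝ) - 1) / 2 + γ) * (1 + s + lam) ^ (2 * b)) := by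
  have hn2 : (2 : ℝ) ≤ (n : ℝ) := by exact_mod_cast hn
  have hω : 0 < omegaMinus n := by
    have h1 : 0 < ((n : ℝ) - 1) / 2 := by linarith
    have hΓ := Real.Gamma_pos_of_pos h1
    have hπ : 0 < Real.pi ^ (((n : ℝ) - 1) / 2) := Real.rpow_pos_of_pos Real.pi_pos _
    unfold omegaMinus
    positivity
  have hC : 0 < 2 ^ (3 - (n : ℝ)) * omegaMinus n / 6 := by
    have h2 : (0 : ℝ) < 2 ^ (3 - (n : ℝ)) := Real.rpow_pos_of_pos two_pos _
    positivity
  refine ⟨2 ^ (3 - (n : ℝ)) * omegaMinus n / 6, hC, ?_⟩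
  intro γ R δ a b c d u hγ hR hδ ha hb hc hd hu hu0 lam s hs hMlam hInt
  set M := max R (δ * s) with hMdef
  have hMR : R ≤ M := le_max_left _ _
  have hM0 : 0 < M := lt_of_lt_of_le hR hMR
  have hk0 : 0 < s + M := by linarith
  have hkl : s + M ≤ lam := by linarith
  have hlam : 0 < lam := lt_of_lt_of_le hk0 hkl
  set A : ℝ := 1 / 6 * 2 ^ (-γ) * c ^ 2 * s ^ (2 * a + (3 * (n : ℝ) - 3) / 2) *
      lam ^ (((n : ℝ) - 3) / 2 - γ) * ((1 + s + lam) ^ (2 * b))⁻¹ with hA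
  have hf0 : ∀ ρ ∈ Set.Ioi (0 : ℝ), 0 ≤ ρ * (u ρ s) ^ 2 *
      ∫ η in |ρ - lam|..(ρ + lam), η ^ (1 - γ) * hKer n η ρ lam := by
    intro ρ hρ
    rw [Set.mem_Ioi] at hρ
    have hJ : 0 ≤ ∫ η in |ρ - lam|..(ρ + lam), η ^ (1 - γ) * hKer n η ρ lam := by
      refine intervalIntegral.integral_nonneg (abs_le.mpr ⟨by linarith, by linarith⟩) ?_
      intro η hη
      exact integrand_nonneg n γ ρ lam hη.1 hη.2
    exact mul_nonneg (mul_nonneg hρ.le (sq_nonneg _)) hJ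
  have hgbase : IntervalIntegrable (fun x : ℝ => (x - (s + M)) ^ (2 * d)) volume (s + M) lam := by
    have h := (intervalIntegral.intervalIntegrable_rpow' (a := 0) (b := lam - (s + M))
      (by linarith : (-1 : ℝ) < 2 * d)).comp_sub_right (s + M)
    simpa using h
  have key : A * ((lam - s - M) ^ (2 * d + 1) / (2 * d + 1)) ≤
      ∫ ρ in Set.Ioi (0 : ℝ), ρ * (u ρ s) ^ 2 *
        ∫ η in |ρ - lam|..(ρ + lam), η ^ (1 - γ) * hKer n η ρ lam := by
    have hsub : Set.Ioo (s + M) lam ⊆ Set.Ioi (0 : ℝ) := fun x hx => by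
      rw [Set.mem_Ioi]; exact hk0.trans hx.1
    have h1 : (∫ ρ in Set.Ioo (s + M) lam, ρ * (u ρ s) ^ 2 *
        ∫ η in |ρ - lam|..(ρ + lam), η ^ (1 - γ) * hKer n η ρ lam) ≤
        ∫ ρ in Set.Ioi (0 : ℝ), ρ * (u ρ s) ^ 2 *
          ∫ η in |ρ - lam|..(ρ + lam), η ^ (1 - γ) * hKer n η ρ lam := by
      refine setIntegral_mono_set hInt ?_ (HasSubset.Subset.eventuallyLE hsub)
      filter_upwards [MeasureTheory.ae_restrict_mem measurableSet_Ioi] with ρ hρ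
      exact hf0 ρ hρ
    refine le_trans ?_ h1
    have h2 : (∫ ρ in Set.Ioo (s + M) lam, A * (ρ - (s + M)) ^ (2 * d)) ≤
        ∫ ρ in Set.Ioo (s + M) lam, ρ * (u ρ s) ^ 2 *
          ∫ η in |ρ - lam|..(ρ + lam), η ^ (1 - γ) * hKer n η ρ lam := by
      refine setIntegral_mono_on ((hgbase.1.mono_set Set.Ioo_subset_Ioc_self).const_mul A)
        (hInt.mono_set hsub) measurableSet_Ioo ?_
      intro ρ hρ
      obtain ⟨hρ1, hρ2⟩ := hρ
      have hρ0 : 0 < ρ := hk0.trans hρ1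
      have hub := hu ρ s hs (by rw [← hMdef]; linarith)
      rw [← hMdef] at hub
      have hlb0 : 0 ≤ c * s ^ a * (ρ - s - M) ^ d / (1 + ρ + s) ^ b :=
        div_nonneg (mul_nonneg (mul_nonneg hc.le (Real.rpow_nonneg hs a))
          (Real.rpow_nonneg (by linarith) d)) (Real.rpow_nonneg (by linarith) b)
      have hsq : (c * s ^ a * (ρ - s - M) ^ d / (1 + ρ + s) ^ b) ^ 2 ≤ (u ρ s) ^ 2 :=
        pow_le_pow_left₀ hlb0 hub 2
      have hJ := inner_lower n hn hγ hρ0 hρ2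
      have hBn : 0 ≤ ρ / 2 * ((2 : ℝ) ^ (-γ) * lam ^ (1 - γ) *
          ((ρ * lam) ^ ((n : ℝ) - 3) / 3)) := by
        have q1 : (0 : ℝ) ≤ (2 : ℝ) ^ (-γ) := Real.rpow_nonneg (by norm_num) _
        have q2 : (0 : ℝ) ≤ lam ^ (1 - γ) := Real.rpow_nonneg hlam.le _
        have q3 : (0 : ℝ) ≤ (ρ * lam) ^ ((n : ℝ) - 3) :=
          Real.rpow_nonneg (by positivity) _
        positivity
      calc A * (ρ - (s + M)) ^ (2 * d)
          = A * (ρ - s - M) ^ (2 * d) := by rw [sub_sub]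
        _ ≤ ρ * (c * s ^ a * (ρ - s - M) ^ d / (1 + ρ + s) ^ b) ^ 2 *
              (ρ / 2 * ((2 : ℝ) ^ (-γ) * lam ^ (1 - γ) *
                ((ρ * lam) ^ ((n : ℝ) - 3) / 3))) := by
            rw [hA]
            exact core_ineq n hn hγ ha hb hc hd hs hM0 hρ1 hρ2
        _ ≤ ρ * (u ρ s) ^ 2 * (ρ / 2 * ((2 : ℝ) ^ (-γ) * lam ^ (1 - γ) *
              ((ρ * lam) ^ ((n : ℝ) - 3) / 3))) :=
            mul_le_mul_of_nonneg_right (mul_le_mul_of_nonneg_left hsq hρ0.le) hBn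
        _ ≤ ρ * (u ρ s) ^ 2 *
              ∫ η in |ρ - lam|..(ρ + lam), η ^ (1 - γ) * hKer n η ρ lam :=
            mul_le_mul_of_nonneg_left hJ (mul_nonneg hρ0.le (sq_nonneg _))
    refine le_trans (le_of_eq ?_) h2
    have hval : (∫ x in (s + M)..lam, (x - (s + M)) ^ (2 * d)) =
        (lam - s - M) ^ (2 * d + 1) / (2 * d + 1) := by
      have h1 := intervalIntegral.integral_comp_sub_right (a := s + M) (b := lam)
        (fun x => x ^ (2 * d)) (s + M)
      have h2' : (∫ x in ((s + M) - (s + M))..(lam - (s + M)), x ^ (2 * d)) =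
          (lam - s - M) ^ (2 * d + 1) / (2 * d + 1) := by
        rw [sub_self, integral_rpow (Or.inl (by linarith : (-1 : ℝ) < 2 * d)),
          Real.zero_rpow (ne_of_gt (by linarith : (0 : ℝ) < 2 * d + 1)),
          show lam - (s + M) = lam - s - M from (sub_sub lam s M).symm]
        ring
      exact h1.trans h2'
    rw [← MeasureTheory.integral_Ioc_eq_integral_Ioo, ← intervalIntegral.integral_of_le hkl,
      intervalIntegral.integral_const_mul, hval]
  rw [ge_iff_le]
  unfold Gconv
  have hP : 0 < 2 ^ (3 - (n : ℝ)) * omegaMinus n / lam ^ ((n : ℝ) - 2) := by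
    have h2 : (0 : ℝ) < 2 ^ (3 - (n : ℝ)) := Real.rpow_pos_of_pos two_pos _
    have h3 : (0 : ℝ) < lam ^ ((n : ℝ) - 2) := Real.rpow_pos_of_pos hlam _
    positivity
  calc 2 ^ (3 - (n : ℝ)) * omegaMinus n / 6 * c ^ 2 * s ^ (2 * a + (3 * (n : ℝ) - 3) / 2) *
        (lam - s - M) ^ (2 * d + 1) /
        ((2 * d + 1) * 2 ^ γ * lam ^ (((n : ℝ) - 1) / 2 + γ) * (1 + s + lam) ^ (2 * b))
      = (2 ^ (3 - (n : ℝ)) * omegaMinus n / lam ^ ((n : ℝ) - 2)) *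
        (A * ((lam - s - M) ^ (2 * d + 1) / (2 * d + 1))) := by
        have hlsp : lam ^ (((n : ℝ) - 3) / 2 - γ) =
            lam ^ ((n : ℝ) - 2) * (lam ^ (((n : ℝ) - 1) / 2 + γ))⁻¹ := by
          rw [← Real.rpow_neg hlam.le, ← Real.rpow_add hlam]
          congr 1
          ring
        have hne1 : ((2 : ℝ) ^ γ) ≠ 0 := ne_of_gt (Real.rpow_pos_of_pos two_pos _)
        have hne2 : lam ^ (((n : ℝ) - 1) / 2 + γ) ≠ 0 :=
          ne_of_gt (Real.rpow_pos_of_pos hlam _)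
        have hne3 : lam ^ ((n : ℝ) - 2) ≠ 0 := ne_of_gt (Real.rpow_pos_of_pos hlam _)
        have hne4 : ((1 + s + lam) ^ (2 * b)) ≠ 0 :=
          ne_of_gt (Real.rpow_pos_of_pos (by linarith) _)
        have hne5 : (2 * d + 1 : ℝ) ≠ 0 := ne_of_gt (by linarith)
        rw [hA, Real.rpow_neg (by norm_num : (0 : ℝ) ≤ 2), hlsp]
        field_simp
    _ ≤ (2 ^ (3 - (n : ℝ)) * omegaMinus n / lam ^ ((n : ℝ) - 2)) *
        ∫ ρ in Set.Ioi (0 : ℝ), ρ * (u ρ s) ^ 2 *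
          ∫ η in |ρ - lam|..(ρ + lam), η ^ (1 - γ) * hKer n η ρ lam :=
        mul_le_mul_of_nonneg_left key hP.le
end
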